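/- Let (X, 𝔅, μ, T) be an ergodic measure-preserving dynamical system and A ∈ 𝔅 with μ(A) > 0, and suppose the return time to A has polynomial tails of summable exponent greater than 1: there exist C > 0 and β ∈ (0,1) with μ(A ∩ {r_A > t}) ≤ C·t^{−1/β} for all t ≥ 1. Let (E_n) be measurable sets with E_n ∩ A = ∅ for all n and with shadows E'_n = (E_n)'_A satisfying 0 < μ(E'_n) and μ(E'_n) → 0. Then μ(E'_n)·r_{E_n} → 0 in μ_{E'_n}-probability: for every ε > 0, μ_{E'_n}({x : r_{E_n}(x) ≥ ε/μ(E'_n)}) → 0 as n → ∞. -/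

import Mathlib

/-! The shadow `E'_A` consists of points of `A` whose orbit meets `E` before returning to `A`, so
on `E'_A` the hitting time of `E` is smaller than the return time to `A`. Hence
`μ_{E'}(r_E ≥ t) ≤ μ(A ∩ {r_A > t}) / μ(E') ≤ C t^{-1/β} / μ(E')`, and with `t ≈ ε / μ(E')` this is
of order `μ(E')^{1/β - 1} → 0` because `1/β > 1`. -/

open MeasureTheory Filter Set ProbabilityTheory
open scoped ENNReal Topology ENat

noncomputable section

variable {X : Type*}

/-- The instant of the `i`-th visit (after time `0`) of the orbit of `x` under `T` to `B`,
with the convention that `hitInstant T B x 0 = 0` and the value is `⊤` if there is no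
such visit. -/
def hitInstant (T : X → X) (B : Set X) (x : X) : ℕ → ℕ∞
  | 0 => 0
  | (i+1) => sInf {m : ℕ∞ | ∃ n : ℕ, hitInstant T B x i < (n : ℕ∞) ∧ T^[n] x ∈ B ∧ m = (n : ℕ∞)}

/-- The first hitting time `r_B(x) = inf {k ≥ 1 : T^k x ∈ B}` (with value `⊤` if the orbit
never enters `B`). -/
def hitTime (T : X → X) (B : Set X) (x : X) : ℕ∞ := hitInstant T B x 1

/-- The `i`-th interarrival time (gap between the `i`-th and `(i+1)`-st visits);
`interGap T B 0 x` is the first hitting time `r_B^{(1)}(x)`, and once some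
visit fails to occur, all subsequent gaps are `⊤`. -/
def interGap (T : X → X) (B : Set X) (i : ℕ) (x : X) : ℝ≥0∞ :=
  if hitInstant T B x i = ⊤ then ⊤
  else ((hitInstant T B x (i+1) - hitInstant T B x i : ℕ∞) : ℝ≥0∞)

/-- The shadow set `E'_A = ⋃_{k ≥ 0} (A ∩ {r_A > k} ∩ T^{-k} E)` of `E` in `A`. -/
def shadow (T : X → X) (A E : Set X) : Set X :=
  ⋃ k : ℕ, A ∩ {x | (k : ℕ∞) < hitTime T A x} ∩ (T^[k]) ⁻¹' E

/-- The induced (first-return) map `T_A(x) = T^{r_A(x)}(x)` (junk value `x` if the orbit of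
`x` never returns to `A`). -/
def inducedMap (T : X → X) (A : Set X) (x : X) : X :=
  T^[sInf {n : ℕ | 1 ≤ n ∧ T^[n] x ∈ A}] x

/-- The rescaled interarrival process `c · Φ_B : x ↦ (c · r_B^{(i)}(x))_{i ≥ 1}`,
as a random element of `ℕ → ℝ≥0∞`. -/
def rescaledProcess (T : X → X) (B : Set X) (c : ℝ≥0∞) (x : X) : ℕ → ℝ≥0∞ :=
  fun i => c * interGap T B i x

/-- Convergence in distribution: the laws of the random elements `f n : X → (ℕ → ℝ≥0∞)`
under the measures `P n` converge weakly to `ν` (tested against bounded continuous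
real functions, with `ℕ → ℝ≥0∞` carrying the product topology). -/
def ConvInDist [MeasurableSpace X] (P : ℕ → Measure X)
    (f : ℕ → X → (ℕ → ℝ≥0∞)) (ν : Measure (ℕ → ℝ≥0∞)) : Prop :=
  ∀ g : BoundedContinuousFunction (ℕ → ℝ≥0∞) ℝ,
    Tendsto (fun n => ∫ x, g (f n x) ∂(P n)) atTop (𝓝 (∫ y, g y ∂ν))

end

section HittingTimes

variable {X : Type*} {T : X → X} {A B E : Set X} {x : X}

theorem hitTime_eq_sInf :
    hitTime T B x = sInf {m : ℕ∞ | ∃ n : ℕ, 0 < (n : ℕ∞) ∧ T^[n] x ∈ B ∧ m = n} :=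
  rfl

theorem hitTime_le_of_iterate_mem {k : ℕ} (hk : 0 < k) (h : T^[k] x ∈ B) :
    hitTime T B x ≤ k :=
  hitTime_eq_sInf ▸ sInf_le ⟨k, by exact_mod_cast hk, h, rfl⟩

theorem lt_hitTime_iff {k : ℕ} :
    (k : ℕ∞) < hitTime T B x ↔ ∀ j : ℕ, 1 ≤ j → j ≤ k → T^[j] x ∉ B := by
  rw [← ENat.add_one_le_iff (ENat.natCast_ne_top k), hitTime_eq_sInf, le_sInf_iff]
  constructor
  · intro h j hj hjk hjB
    have : k + 1 ≤ j := by exact_mod_cast h j ⟨j, by exact_mod_cast hj, hjB, rfl⟩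
    omega
  · rintro h _ ⟨n, hn, hnB, rfl⟩
    have hn : 1 ≤ n := by exact_mod_cast hn
    by_contra! hlt
    have hlt : n < k + 1 := by exact_mod_cast hlt
    exact h n hn (by omega) hnB

theorem shadow_subset : shadow T A E ⊆ A := by
  intro x hx
  obtain ⟨k, ⟨hxA, -⟩, -⟩ := mem_iUnion.mp hx
  exact hxA

theorem hitTime_lt_hitTime_of_mem_shadow (hEA : Disjoint E A) (hx : x ∈ shadow T A E) :
    hitTime T E x < hitTime T A x := by
  obtain ⟨k, ⟨hxA, hkA⟩, hkE⟩ := mem_iUnion.mp hx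
  have hk : 0 < k := Nat.pos_of_ne_zero fun hk0 =>
    hEA.ne_of_mem (by simpa [hk0] using hkE) hxA rfl
  exact (hitTime_le_of_iterate_mem hk hkE).trans_lt hkA

variable [MeasurableSpace X]

theorem measurableSet_lt_hitTime (hT : Measurable T) (hB : MeasurableSet B) (k : ℕ) :
    MeasurableSet {x | (k : ℕ∞) < hitTime T B x} := by
  have : {x | (k : ℕ∞) < hitTime T B x} = ⋂ j ∈ Finset.Icc 1 k, (T^[j]) ⁻¹' Bᶜ := by
    ext x
    simp [lt_hitTime_iff]
  rw [this]
  exact .biInter (Finset.Icc 1 k).countable_toSet fun j _ => hT.iterate j hB.compl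

theorem measurableSet_shadow (hT : Measurable T) (hA : MeasurableSet A) (hE : MeasurableSet E) :
    MeasurableSet (shadow T A E) :=
  .iUnion fun k => (hA.inter (measurableSet_lt_hitTime hT hA k)).inter (hT.iterate k hE)

theorem cond_shadow_le_hitTime_le (μ : Measure X) (hT : Measurable T) (hA : MeasurableSet A)
    (hE : MeasurableSet E) (hEA : Disjoint E A) {t : ℕ} {M : ℝ≥0∞} (htM : (t : ℝ≥0∞) ≤ M) :
    μ[|shadow T A E] {x | M ≤ (hitTime T E x : ℝ≥0∞)} ≤
      (μ (shadow T A E))⁻¹ * μ (A ∩ {x | (t : ℕ∞) < hitTime T A x}) := by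
  rw [cond_apply (measurableSet_shadow hT hA hE)]
  refine mul_le_mul_right (measure_mono ?_) _
  rintro x ⟨hxs, hxM⟩
  refine ⟨shadow_subset hxs, lt_of_le_of_lt ?_ (hitTime_lt_hitTime_of_mem_shadow hEA hxs)⟩
  exact_mod_cast htM.trans hxM

theorem cond_shadow_hitTime_ge_le (μ : Measure X) (hT : Measurable T) (hA : MeasurableSet A)
    (hE : MeasurableSet E) (hEA : Disjoint E A) {C p : ℝ}
    (htail : ∀ t : ℕ, 1 ≤ t →
      μ (A ∩ {x | (t : ℕ∞) < hitTime T A x}) ≤ ENNReal.ofReal (C * (t : ℝ) ^ (-p)))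
    {a ε : ℝ} (ha : μ (shadow T A E) = ENNReal.ofReal a) (ha_pos : 0 < a) (haε : a ≤ ε) :
    μ[|shadow T A E] {x | ENNReal.ofReal ε / μ (shadow T A E) ≤ (hitTime T E x : ℝ≥0∞)} ≤
      ENNReal.ofReal (C / ε * (ε / a * (⌊ε / a⌋₊ : ℝ) ^ (-p))) := by
  have hε : 0 < ε := ha_pos.trans_le haε
  have hfloor : 1 ≤ ⌊ε / a⌋₊ := Nat.one_le_floor_iff _ |>.mpr ((one_le_div ha_pos).mpr haε)
  have hthreshold : (⌊ε / a⌋₊ : ℝ≥0∞) ≤ ENNReal.ofReal ε / μ (shadow T A E) := by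
    rw [ha, ← ENNReal.ofReal_div_of_pos ha_pos, ← ENNReal.ofReal_natCast]
    exact ENNReal.ofReal_le_ofReal (Nat.floor_le (by positivity))
  calc _ ≤ (μ (shadow T A E))⁻¹ * μ (A ∩ {x | (⌊ε / a⌋₊ : ℕ∞) < hitTime T A x}) :=
        cond_shadow_le_hitTime_le μ hT hA hE hEA hthreshold
    _ ≤ (μ (shadow T A E))⁻¹ * ENNReal.ofReal (C * (⌊ε / a⌋₊ : ℝ) ^ (-p)) :=
        mul_le_mul_right (htail _ hfloor) _
    _ = ENNReal.ofReal (C / ε * (ε / a * (⌊ε / a⌋₊ : ℝ) ^ (-p))) := by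
        rw [ha, ← ENNReal.ofReal_inv_of_pos ha_pos, ← ENNReal.ofReal_mul (by positivity)]
        congr 1
        field_simp

end HittingTimes

theorem tendsto_mul_natFloor_rpow_neg {p : ℝ} (hp : 1 < p) :
    Tendsto (fun u : ℝ => u * (⌊u⌋₊ : ℝ) ^ (-p)) atTop (𝓝 0) := by
  have hratio : Tendsto (fun u : ℝ => ((⌊u⌋₊ : ℝ) / u)⁻¹) atTop (𝓝 1) := by
    simpa using (tendsto_nat_floor_div_atTop (R := ℝ)).inv₀ one_ne_zero
  have hpow : Tendsto (fun u : ℝ => (⌊u⌋₊ : ℝ) ^ (-(p - 1))) atTop (𝓝 0) :=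
    (tendsto_rpow_neg_atTop (by linarith)).comp
      (tendsto_natCast_atTop_atTop.comp tendsto_nat_floor_atTop)
  have hlim := hratio.mul hpow
  rw [mul_zero] at hlim
  refine hlim.congr' ?_
  filter_upwards [eventually_ge_atTop 1] with u hu
  have hfloor : (0 : ℝ) < ⌊u⌋₊ := by exact_mod_cast Nat.floor_pos.mpr hu
  rw [inv_div, neg_sub, Real.rpow_sub hfloor, Real.rpow_one, Real.rpow_neg hfloor.le]
  field_simp

theorem statement9_general {X : Type*} [MeasurableSpace X]
    (T : X → X) (μ : Measure X) [IsProbabilityMeasure μ] (hErg : Ergodic T μ)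
    (A : Set X) (hA : MeasurableSet A)
    (C : ℝ) (β : ℝ) (hβ0 : 0 < β) (hβ1 : β < 1)
    (htail : ∀ t : ℕ, 1 ≤ t →
      μ (A ∩ {x | (t : ℕ∞) < hitTime T A x}) ≤ ENNReal.ofReal (C * (t : ℝ) ^ (-(1 / β))))
    (E : ℕ → Set X) (hE : ∀ n, MeasurableSet (E n)) (hEA : ∀ n, Disjoint (E n) A)
    (hpos : ∀ n, 0 < μ (shadow T A (E n)))
    (h0 : Tendsto (fun n => μ (shadow T A (E n))) atTop (𝓝 0)) :
    ∀ ε : ℝ, 0 < ε →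
      Tendsto (fun n => μ[|shadow T A (E n)]
        {x | ENNReal.ofReal ε / μ (shadow T A (E n)) ≤ (hitTime T (E n) x : ℝ≥0∞)})
        atTop (𝓝 0) := by
  intro ε hε
  set a := fun n => (μ (shadow T A (E n))).toReal
  have ha_pos n : 0 < a n := ENNReal.toReal_pos (hpos n).ne' (measure_ne_top μ _)
  have ha : Tendsto a atTop (𝓝[>] 0) := by
    refine tendsto_nhdsWithin_iff.mpr ⟨?_, .of_forall ha_pos⟩
    have h := (ENNReal.tendsto_toReal ENNReal.zero_ne_top).comp h0
    rwa [ENNReal.toReal_zero] at h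
  have hbound : ∀ᶠ n in atTop,
      μ[|shadow T A (E n)]
        {x | ENNReal.ofReal ε / μ (shadow T A (E n)) ≤ (hitTime T (E n) x : ℝ≥0∞)} ≤
        ENNReal.ofReal (C / ε * (ε / a n * (⌊ε / a n⌋₊ : ℝ) ^ (-(1 / β)))) := by
    filter_upwards [ha.eventually (eventually_nhdsWithin_of_eventually_nhds (gt_mem_nhds hε))]
      with n haε
    exact cond_shadow_hitTime_ge_le μ hErg.measurable hA (hE n) (hEA n) htail
      (ENNReal.ofReal_toReal (measure_ne_top μ _)).symm (ha_pos n) haε.le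
  have hlim : Tendsto
      (fun n => ENNReal.ofReal (C / ε * (ε / a n * (⌊ε / a n⌋₊ : ℝ) ^ (-(1 / β))))) atTop (𝓝 0) := by
    have hu : Tendsto (fun n => ε / a n) atTop atTop := by
      simpa [div_eq_mul_inv] using ha.inv_tendsto_nhdsGT_zero.const_mul_atTop hε
    have := ((tendsto_mul_natFloor_rpow_neg (one_lt_one_div hβ0 hβ1)).comp hu).const_mul (C / ε)
    simpa using ENNReal.tendsto_ofReal this
  exact tendsto_of_tendsto_of_tendsto_of_le_of_le' tendsto_const_nhds hlim
    (.of_forall fun _ => zero_le) hbound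

/-- If the return time to `A` has polynomial tails
(`μ(A ∩ {r_A > t}) ≤ C t^{-1/β}` with `β ∈ (0,1)`) and `(E_n)` are sets disjoint from `A`
whose shadows `E'_n` have positive measure tending to `0`, then `μ(E'_n)·r_{E_n} → 0` in
`μ_{E'_n}`-probability. -/
theorem statement9 {X : Type*} [MetricSpace X] [MeasurableSpace X] [BorelSpace X]
    (T : X → X) (μ : Measure X) [IsProbabilityMeasure μ] (hErg : Ergodic T μ)
    (A : Set X) (hA : MeasurableSet A) (hApos : 0 < μ A)
    (C : ℝ) (hC : 0 < C) (β : ℝ) (hβ0 : 0 < β) (hβ1 : β < 1)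
    (htail : ∀ t : ℕ, 1 ≤ t →
      μ (A ∩ {x | (t : ℕ∞) < hitTime T A x}) ≤ ENNReal.ofReal (C * (t : ℝ) ^ (-(1 / β))))
    (E : ℕ → Set X) (hE : ∀ n, MeasurableSet (E n)) (hEA : ∀ n, Disjoint (E n) A)
    (hpos : ∀ n, 0 < μ (shadow T A (E n)))
    (h0 : Tendsto (fun n => μ (shadow T A (E n))) atTop (𝓝 0)) :
    ∀ ε : ℝ, 0 < ε →
      Tendsto (fun n => μ[|shadow T A (E n)]
        {x | ENNReal.ofReal ε / μ (shadow T A (E n)) ≤ (hitTime T (E n) x : ℝ≥0∞)})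
        atTop (𝓝 0) :=
  statement9_general T μ hErg A hA C β hβ0 hβ1 htail E hE hEA hpos h0
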